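/- arXiv:2410.05848 — 3 statements merged into one kernel-verified Lean document; each statement's English description precedes it below -/
import Mathlib

section
/- Let P and Q be orthogonal projections on a complex Hilbert space H with operator norm ‖P - Q‖ < 1. Then the map T : range Q → range P given by T x = P x is a linear bijection from range Q onto range P, and satisfies ‖T x‖² ≥ (1 − ‖P - Q‖)·‖x‖² for all x ∈ range Q. -/
/-!
For `x` in the range of `Q` we have `x - P x = (Q - P) x`, so `‖x - P x‖ ≤ ‖P - Q‖ ‖x‖`. When
`P x = 0` this forces `x = 0`, which gives injectivity; since `P` is an orthogonal projection,
Pythagoras `‖x‖² = ‖P x‖² + ‖x - P x‖²` turns it into the lower bound on `‖P x‖`. For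
surjectivity, `1 - (P - Q)` is invertible by the Neumann series; if `(1 - P + Q) z = P y`,
applying `P` gives `P (Q z) = P y`.
-/

open scoped InnerProductSpace

namespace ContinuousLinearMap

section NormedSpace

variable {𝕜 E : Type*} [NontriviallyNormedField 𝕜] [NormedAddCommGroup E] [NormedSpace 𝕜 E]
  {P Q : E →L[𝕜] E}

theorem _root_.IsIdempotentElem.apply_of_mem_range (hQ : IsIdempotentElem Q) {x : E}
    (hx : x ∈ Set.range Q) : Q x = x := by
  obtain ⟨y, rfl⟩ := hx
  exact congr($hQ y)

theorem norm_sub_apply_le_of_apply_eq_self {x : E} (hx : Q x = x) :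
    ‖x - P x‖ ≤ ‖P - Q‖ * ‖x‖ :=
  calc ‖x - P x‖ = ‖(P - Q) x‖ := by rw [sub_apply, hx, norm_sub_rev]
    _ ≤ ‖P - Q‖ * ‖x‖ := (P - Q).le_opNorm x

theorem injOn_range_of_norm_sub_lt_one (hQ : IsIdempotentElem Q) (hPQ : ‖P - Q‖ < 1) :
    Set.InjOn P (Set.range Q) := by
  intro x hx y hy hxy
  have hQxy : Q (x - y) = x - y := by
    rw [map_sub, hQ.apply_of_mem_range hx, hQ.apply_of_mem_range hy]
  have hle : ‖x - y‖ ≤ ‖P - Q‖ * ‖x - y‖ := by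
    simpa [hxy] using norm_sub_apply_le_of_apply_eq_self (P := P) hQxy
  rw [← sub_eq_zero, ← norm_le_zero_iff]
  nlinarith [norm_nonneg (x - y)]

theorem surjOn_range_of_norm_sub_lt_one [CompleteSpace E] (hP : IsIdempotentElem P)
    (hPQ : ‖P - Q‖ < 1) : Set.SurjOn P (Set.range Q) (Set.range P) := by
  rintro _ ⟨y, rfl⟩
  have hPP (w : E) : P (P w) = P w := congr($hP w)
  let u := Units.oneSub (P - Q) hPQ
  set z := (↑u⁻¹ : E →L[𝕜] E) (P y)
  have hz : (1 - (P - Q)) z = P y := by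
    rw [← Units.val_oneSub (P - Q) hPQ]
    exact congr($(u.mul_inv) (P y))
  refine ⟨Q z, ⟨z, rfl⟩, ?_⟩
  simpa [hPP] using congr(P $hz)

end NormedSpace

section InnerProductSpace

variable {𝕜 E : Type*} [RCLike 𝕜] [NormedAddCommGroup E] [InnerProductSpace 𝕜 E]
  [CompleteSpace E] {P Q : E →L[𝕜] E}

theorem _root_.IsStarProjection.norm_sq_eq_norm_apply_sq_add_norm_sub_apply_sq
    (hP : IsStarProjection P) (x : E) : ‖x‖ ^ 2 = ‖P x‖ ^ 2 + ‖x - P x‖ ^ 2 := by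
  have hPP : P (P x) = P x := congr($hP.isIdempotentElem x)
  have horth : ⟪P x, x - P x⟫_𝕜 = 0 := calc
    _ = ⟪x, P (x - P x)⟫_𝕜 := hP.isSelfAdjoint.isSymmetric x (x - P x)
    _ = 0 := by rw [map_sub, hPP, sub_self, inner_zero_right]
  simpa [sq] using norm_add_sq_eq_norm_sq_add_norm_sq_of_inner_eq_zero _ _ horth

theorem _root_.IsStarProjection.one_sub_norm_sub_mul_norm_sq_le (hP : IsStarProjection P) {x : E}
    (hx : Q x = x) : (1 - ‖P - Q‖) * ‖x‖ ^ 2 ≤ ‖P x‖ ^ 2 := by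
  have hpyth := hP.norm_sq_eq_norm_apply_sq_add_norm_sub_apply_sq x
  have hdist := norm_sub_apply_le_of_apply_eq_self (P := P) hx
  -- `‖x - P x‖ ≤ ‖x‖` bounds `‖x - P x‖²` by `‖P - Q‖ ‖x‖²`, whatever the size of `‖P - Q‖`
  have hle : ‖x - P x‖ ≤ ‖x‖ := by
    nlinarith [norm_nonneg (P x), norm_nonneg x, norm_nonneg (x - P x)]
  nlinarith [mul_le_mul hle hdist (norm_nonneg _) (norm_nonneg x)]

end InnerProductSpace

end ContinuousLinearMap

theorem restricted_projection_bijective_of_norm_sub_lt_one_general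
    {H : Type*} [NormedAddCommGroup H] [InnerProductSpace ℂ H] [CompleteSpace H]
    (P Q : H →L[ℂ] H)
    (hP : P ∘L P = P) (hPsa : IsSelfAdjoint P)
    (hQ : Q ∘L Q = Q)
    (hPQ : ‖P - Q‖ < 1) :
    Function.Bijective (fun x : LinearMap.range (Q : H →ₗ[ℂ] H) =>
      (⟨P (x : H), LinearMap.mem_range.mpr ⟨(x : H), rfl⟩⟩ : LinearMap.range (P : H →ₗ[ℂ] H))) ∧
    ∀ x : H, x ∈ LinearMap.range (Q : H →ₗ[ℂ] H) → (1 - ‖P - Q‖) * ‖x‖ ^ 2 ≤ ‖P x‖ ^ 2 := by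
  have hPi : IsIdempotentElem P := hP
  have hQi : IsIdempotentElem Q := hQ
  refine ⟨⟨fun x y hxy => Subtype.ext ?_, fun y => ?_⟩, fun x hx => ?_⟩
  · exact ContinuousLinearMap.injOn_range_of_norm_sub_lt_one hQi hPQ x.2 y.2 congr($hxy.1)
  · obtain ⟨x, hx, hxy⟩ := ContinuousLinearMap.surjOn_range_of_norm_sub_lt_one hPi hPQ y.2
    exact ⟨⟨x, hx⟩, Subtype.ext hxy⟩
  · exact IsStarProjection.one_sub_norm_sub_mul_norm_sq_le ⟨hPi, hPsa⟩ (hQi.apply_of_mem_range hx)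

theorem restricted_projection_bijective_of_norm_sub_lt_one
    {H : Type*} [NormedAddCommGroup H] [InnerProductSpace ℂ H] [CompleteSpace H]
    (P Q : H →L[ℂ] H)
    (hP : P ∘L P = P) (hPsa : IsSelfAdjoint P)
    (hQ : Q ∘L Q = Q) (hQsa : IsSelfAdjoint Q)
    (hPQ : ‖P - Q‖ < 1) :
    Function.Bijective (fun x : LinearMap.range (Q : H →ₗ[ℂ] H) =>
      (⟨P (x : H), LinearMap.mem_range.mpr ⟨(x : H), rfl⟩⟩ : LinearMap.range (P : H →ₗ[ℂ] H))) ∧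
    ∀ x : H, x ∈ LinearMap.range (Q : H →ₗ[ℂ] H) → (1 - ‖P - Q‖) * ‖x‖ ^ 2 ≤ ‖P x‖ ^ 2 :=
  restricted_projection_bijective_of_norm_sub_lt_one_general P Q hP hPsa hQ hPQ
end

section
/- Let P and Q be orthogonal projections on a complex Hilbert space H and set P⊥ = I − P and Q⊥ = I − Q, which are again orthogonal projections. Then ker(P⊥ − Q⊥ + I) = (range P) ∩ (ker Q) and ker(P⊥ − Q⊥ − I) = (ker P) ∩ (range Q). Consequently, whenever these subspaces are finite-dimensional, dim ker(P⊥ − Q⊥ + I) − dim ker(P⊥ − Q⊥ − I) = −(dim ker(P − Q + I) − dim ker(P − Q − I)). -/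
/-!
For a star projection `p`, `re ⟪p x, x⟫ = ‖p x‖ ^ 2`. Since `p - q - 1 = -((1 - p) + q)`, a vector
`x` in its kernel satisfies `‖(1 - p) x‖ ^ 2 + ‖q x‖ ^ 2 = 0`, so
`ker (p - q - 1) = ker (1 - p) ⊓ ker q = range p ⊓ ker q`. Passing to complements only negates the
operators `p - q ± 1` and swaps the two signs, which exchanges the two kernels and hence flips the
sign of the relative index.
-/

open LinearMap

namespace IsStarProjection

open ContinuousLinearMap

variable {𝕜 E : Type*} [RCLike 𝕜] [NormedAddCommGroup E] [InnerProductSpace 𝕜 E] [CompleteSpace E]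
  {p q : E →L[𝕜] E}

lemma re_inner_apply_self (hp : IsStarProjection p) (x : E) :
    RCLike.re (inner 𝕜 (p x) x) = ‖p x‖ ^ 2 := by
  have hpp : p (p x) = p x := congr($(hp.isIdempotentElem.eq) x)
  calc RCLike.re (inner 𝕜 (p x) x) = RCLike.re (inner 𝕜 (p (p x)) x) := by rw [hpp]
    _ = RCLike.re (inner 𝕜 (p x) (p x)) := congrArg _ (hp.isSelfAdjoint.isSymmetric (p x) x)
    _ = ‖p x‖ ^ 2 := inner_self_eq_norm_sq _

lemma ker_add (hp : IsStarProjection p) (hq : IsStarProjection q) :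
    ker ((p + q : E →L[𝕜] E) : E →ₗ[𝕜] E) = ker (p : E →ₗ[𝕜] E) ⊓ ker (q : E →ₗ[𝕜] E) := by
  ext x
  simp only [toLinearMap_add, mem_ker, Submodule.mem_inf, LinearMap.add_apply,
    ContinuousLinearMap.coe_coe]
  refine ⟨fun h ↦ ?_, fun ⟨hpx, hqx⟩ ↦ by rw [hpx, hqx, add_zero]⟩
  have hsum : ‖p x‖ ^ 2 + ‖q x‖ ^ 2 = 0 := by
    rw [← hp.re_inner_apply_self, ← hq.re_inner_apply_self, ← map_add, ← inner_add_left, h,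
      inner_zero_left, map_zero]
  simpa using (add_eq_zero_iff_of_nonneg (sq_nonneg _) (sq_nonneg _)).mp hsum

lemma ker_sub_sub_one (hp : IsStarProjection p) (hq : IsStarProjection q) :
    ker ((p - q - 1 : E →L[𝕜] E) : E →ₗ[𝕜] E) =
      range (p : E →ₗ[𝕜] E) ⊓ ker (q : E →ₗ[𝕜] E) := by
  have hneg : p - q - 1 = -((1 - p) + q) := by abel
  rw [hneg, toLinearMap_neg, ker_neg, hp.one_sub.ker_add hq, toLinearMap_sub, toLinearMap_one,
    ← (hp.isIdempotentElem.toLinearMap).range_eq_ker_one_sub]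

lemma ker_sub_add_one (hp : IsStarProjection p) (hq : IsStarProjection q) :
    ker ((p - q + 1 : E →L[𝕜] E) : E →ₗ[𝕜] E) =
      ker (p : E →ₗ[𝕜] E) ⊓ range (q : E →ₗ[𝕜] E) := by
  have hneg : p - q + 1 = -(q - p - 1) := by abel
  rw [hneg, toLinearMap_neg, ker_neg, hq.ker_sub_sub_one hp, inf_comm]

end IsStarProjection

namespace ContinuousLinearMap

variable {R M : Type*} [Ring R] [TopologicalSpace M] [AddCommGroup M] [IsTopologicalAddGroup M]
  [Module R M] (p q : M →L[R] M)

lemma ker_one_sub_sub_one_sub_add_one :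
    ker (((1 - p) - (1 - q) + 1 : M →L[R] M) : M →ₗ[R] M) =
      ker ((p - q - 1 : M →L[R] M) : M →ₗ[R] M) := by
  rw [show (1 - p) - (1 - q) + 1 = -(p - q - 1) by abel, toLinearMap_neg, ker_neg]

lemma ker_one_sub_sub_one_sub_sub_one :
    ker (((1 - p) - (1 - q) - 1 : M →L[R] M) : M →ₗ[R] M) =
      ker ((p - q + 1 : M →L[R] M) : M →ₗ[R] M) := by
  rw [show (1 - p) - (1 - q) - 1 = -(p - q + 1) by abel, toLinearMap_neg, ker_neg]

end ContinuousLinearMap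

theorem duality_for_relative_index
    {H : Type*} [NormedAddCommGroup H] [InnerProductSpace ℂ H] [CompleteSpace H]
    (P Q : H →L[ℂ] H)
    (hP : P ∘L P = P) (hPsa : IsSelfAdjoint P)
    (hQ : Q ∘L Q = Q) (hQsa : IsSelfAdjoint Q) :
    ((1 - P) ∘L (1 - P) = 1 - P ∧ IsSelfAdjoint (1 - P : H →L[ℂ] H)) ∧
    ((1 - Q) ∘L (1 - Q) = 1 - Q ∧ IsSelfAdjoint (1 - Q : H →L[ℂ] H)) ∧
    LinearMap.ker (((1 - P) - (1 - Q) + 1 : H →L[ℂ] H) : H →ₗ[ℂ] H) =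
      LinearMap.range (P : H →ₗ[ℂ] H) ⊓ LinearMap.ker (Q : H →ₗ[ℂ] H) ∧
    LinearMap.ker (((1 - P) - (1 - Q) - 1 : H →L[ℂ] H) : H →ₗ[ℂ] H) =
      LinearMap.ker (P : H →ₗ[ℂ] H) ⊓ LinearMap.range (Q : H →ₗ[ℂ] H) ∧
    (FiniteDimensional ℂ (LinearMap.ker (((1 - P) - (1 - Q) + 1 : H →L[ℂ] H) : H →ₗ[ℂ] H)) →
     FiniteDimensional ℂ (LinearMap.ker (((1 - P) - (1 - Q) - 1 : H →L[ℂ] H) : H →ₗ[ℂ] H)) →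
     FiniteDimensional ℂ (LinearMap.ker ((P - Q + 1 : H →L[ℂ] H) : H →ₗ[ℂ] H)) →
     FiniteDimensional ℂ (LinearMap.ker ((P - Q - 1 : H →L[ℂ] H) : H →ₗ[ℂ] H)) →
      (Module.finrank ℂ (LinearMap.ker (((1 - P) - (1 - Q) + 1 : H →L[ℂ] H) : H →ₗ[ℂ] H)) : ℤ) -
          (Module.finrank ℂ (LinearMap.ker (((1 - P) - (1 - Q) - 1 : H →L[ℂ] H) : H →ₗ[ℂ] H)) : ℤ) =
        -((Module.finrank ℂ (LinearMap.ker ((P - Q + 1 : H →L[ℂ] H) : H →ₗ[ℂ] H)) : ℤ) -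
          (Module.finrank ℂ (LinearMap.ker ((P - Q - 1 : H →L[ℂ] H) : H →ₗ[ℂ] H)) : ℤ))) := by
  have hPproj : IsStarProjection P := ⟨hP, hPsa⟩
  have hQproj : IsStarProjection Q := ⟨hQ, hQsa⟩
  refine ⟨⟨hPproj.one_sub.isIdempotentElem, hPproj.one_sub.isSelfAdjoint⟩,
    ⟨hQproj.one_sub.isIdempotentElem, hQproj.one_sub.isSelfAdjoint⟩, ?_, ?_, ?_⟩
  · rw [ContinuousLinearMap.ker_one_sub_sub_one_sub_add_one, hPproj.ker_sub_sub_one hQproj]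
  · rw [ContinuousLinearMap.ker_one_sub_sub_one_sub_sub_one, hPproj.ker_sub_add_one hQproj]
  · intro _ _ _ _
    rw [ContinuousLinearMap.ker_one_sub_sub_one_sub_add_one,
      ContinuousLinearMap.ker_one_sub_sub_one_sub_sub_one]
    ring
end

section
/- Let P and Q be orthogonal projections on a complex Hilbert space H and suppose there exists a compact operator K on H such that the operator norm ‖P − Q − K‖ < 1. Then (ker P) ∩ (range Q) and (range P) ∩ (ker Q) are finite-dimensional subspaces of H. -/
/-!
On `ker P ⊓ range Q` the operator `P - Q` acts as `-1`, and on `range P ⊓ ker Q` as `1`, so on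
either subspace `‖x‖ = ‖(P - Q) x‖ ≤ ‖P - Q - K‖ ‖x‖ + ‖K x‖`, i.e. the compact operator `K` is
bounded below there by `1 - ‖P - Q - K‖ > 0`. A compact operator bounded below maps the unit
ball of the subspace antilipschitzly into a totally bounded set, so that ball is totally bounded
and Riesz's theorem makes the subspace finite-dimensional.
-/

open Metric

namespace ContinuousLinearMap

variable {𝕜 E F : Type*} [NontriviallyNormedField 𝕜]
  [NormedAddCommGroup E] [NormedSpace 𝕜 E] [NormedAddCommGroup F] [NormedSpace 𝕜 F]

theorem one_sub_opNorm_sub_mul_norm_le (S K : E →L[𝕜] F) {x : E} (hx : ‖S x‖ = ‖x‖) :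
    (1 - ‖S - K‖) * ‖x‖ ≤ ‖K x‖ := by
  have : ‖x‖ ≤ ‖(S - K) x‖ + ‖K x‖ := hx ▸ by simpa using norm_add_le ((S - K) x) (K x)
  nlinarith [(S - K).le_opNorm x]

theorem finiteDimensional_of_mul_norm_le [CompleteSpace 𝕜] {K : E →L[𝕜] F}
    (hK : IsCompactOperator K) (V : Submodule 𝕜 E) {δ : ℝ} (hδ : 0 < δ)
    (hV : ∀ x ∈ V, δ * ‖x‖ ≤ ‖K x‖) : FiniteDimensional 𝕜 V := by
  set KV : V →L[𝕜] F := K.comp V.subtypeL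
  have hanti : AntilipschitzWith (Real.toNNReal δ⁻¹) KV :=
    KV.antilipschitz_of_bound fun x => by
      rw [Real.coe_toNNReal _ (inv_nonneg.2 hδ.le), inv_mul_eq_div, le_div_iff₀ hδ, mul_comm]
      exact hV x x.2
  have hball : closedBall (0 : V) 1 ⊆ KV ⁻¹' closure (K '' closedBall 0 1) := fun x hx =>
    subset_closure ⟨x, by simpa using hx, rfl⟩
  refine .of_totallyBounded_nhds_zero 𝕜 (closedBall_mem_nhds (0 : V) one_pos) ?_
  exact (totallyBounded_preimage (hanti.isUniformInducing KV.uniformContinuous)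
    (hK.isCompact_closure_image_closedBall 1).totallyBounded).subset hball

theorem finiteDimensional_of_norm_apply_eq [CompleteSpace 𝕜] {S K : E →L[𝕜] F}
    (hK : IsCompactOperator K) (hSK : ‖S - K‖ < 1) (V : Submodule 𝕜 E)
    (hV : ∀ x ∈ V, ‖S x‖ = ‖x‖) : FiniteDimensional 𝕜 V :=
  finiteDimensional_of_mul_norm_le hK V (sub_pos.2 hSK) fun x hx =>
    one_sub_opNorm_sub_mul_norm_le S K (hV x hx)

theorem norm_sub_apply_eq_of_mem_ker_inf_range {P Q : E →L[𝕜] E} (hQ : Q ∘L Q = Q) {x : E}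
    (hx : x ∈ LinearMap.ker (P : E →ₗ[𝕜] E) ⊓ LinearMap.range (Q : E →ₗ[𝕜] E)) :
    ‖(P - Q) x‖ = ‖x‖ := by
  obtain ⟨hPx, y, rfl⟩ := hx
  have hQy : Q (Q y) = Q y := DFunLike.congr_fun hQ y
  simp only [coe_coe, SetLike.mem_coe, LinearMap.mem_ker] at hPx ⊢
  rw [sub_apply, hPx, hQy, zero_sub, norm_neg]

end ContinuousLinearMap

open ContinuousLinearMap

theorem fredholm_pair_of_compact_perturbation_general
    {H : Type*} [NormedAddCommGroup H] [InnerProductSpace ℂ H]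
    (P Q K : H →L[ℂ] H)
    (hP : P ∘L P = P)
    (hQ : Q ∘L Q = Q)
    (hK : IsCompactOperator K)
    (hnorm : ‖P - Q - K‖ < 1) :
    FiniteDimensional ℂ (LinearMap.ker (P : H →ₗ[ℂ] H) ⊓ LinearMap.range (Q : H →ₗ[ℂ] H) : Submodule ℂ H) ∧
    FiniteDimensional ℂ (LinearMap.range (P : H →ₗ[ℂ] H) ⊓ LinearMap.ker (Q : H →ₗ[ℂ] H) : Submodule ℂ H) := by
  have hQP : ∀ x ∈ LinearMap.range (P : H →ₗ[ℂ] H) ⊓ LinearMap.ker (Q : H →ₗ[ℂ] H),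
      ‖(P - Q) x‖ = ‖x‖ := fun x hx => by
    rw [← neg_sub, neg_apply, norm_neg]
    exact norm_sub_apply_eq_of_mem_ker_inf_range hP ⟨hx.2, hx.1⟩
  exact ⟨finiteDimensional_of_norm_apply_eq hK hnorm _
      fun _ => norm_sub_apply_eq_of_mem_ker_inf_range hQ,
    finiteDimensional_of_norm_apply_eq hK hnorm _ hQP⟩

theorem fredholm_pair_of_compact_perturbation
    {H : Type*} [NormedAddCommGroup H] [InnerProductSpace ℂ H] [CompleteSpace H]
    (P Q K : H →L[ℂ] H)
    (hP : P ∘L P = P) (hPsa : IsSelfAdjoint P)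
    (hQ : Q ∘L Q = Q) (hQsa : IsSelfAdjoint Q)
    (hK : IsCompactOperator K)
    (hnorm : ‖P - Q - K‖ < 1) :
    FiniteDimensional ℂ (LinearMap.ker (P : H →ₗ[ℂ] H) ⊓ LinearMap.range (Q : H →ₗ[ℂ] H) : Submodule ℂ H) ∧
    FiniteDimensional ℂ (LinearMap.range (P : H →ₗ[ℂ] H) ⊓ LinearMap.ker (Q : H →ₗ[ℂ] H) : Submodule ℂ H) :=
  fredholm_pair_of_compact_perturbation_general P Q K hP hQ hK hnorm
end
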